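/- Constraint-free context intersection: if Σ; Γ₁ ⊢ τ : m and Σ; Γ₂ ⊢ τ : m, where τ contains no equality guards, then Σ; min(Γ₁, Γ₂) ⊢ τ : m, where min is the pointwise minimum of modes. -/
import Mathlib


/-- Separability modes. -/
inductive Mode : Type
  | ind | sep | deepsep
deriving DecidableEq

def Mode.toNat : Mode → ℕ
  | .ind => 0
  | .sep => 1
  | .deepsep => 2

instance : LinearOrder Mode :=
  LinearOrder.lift' Mode.toNat (fun a b => by cases a <;> cases b <;> simp [Mode.toNat])

/-- Mode composition: Ind ∘ m = Ind, Sep ∘ m = m, Deepsep ∘ m = Deepsep. -/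
def Mode.comp : Mode → Mode → Mode
  | .ind, _ => .ind
  | .sep, m => m
  | .deepsep, _ => .deepsep

/-- Constraint-free type expressions: variables, builtins, constructor
applications, arrows, products, universals and existentials. -/
inductive Ty : Type
  | var : ℕ → Ty
  | tfloat : Ty
  | tint : Ty
  | tbool : Ty
  | constr : ℕ → (n : ℕ) → (Fin n → Ty) → Ty
  | arrow : Ty → Ty → Ty
  | prod : (n : ℕ) → (Fin n → Ty) → Ty
  | all : ℕ → Ty → Ty
  | ex : ℕ → Ty → Ty

/-- A mode signature assigns a mode to each parameter of each type constructor. -/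
abbrev Sig := ℕ → ℕ → Mode

/-- A context assigns a mode to each type variable. -/
abbrev Ctx := ℕ → Mode

/-- Context update. -/
def Ctx.upd (Γ : Ctx) (a : ℕ) (m : Mode) : Ctx :=
  fun x => if x = a then m else Γ x

/-- The separability inference system with the variable axiom and the
conversion rule. -/
inductive Derives (Sg : Sig) : Ctx → Ty → Mode → Prop
  | var {Γ a m} : Γ a = m → Derives Sg Γ (.var a) m
  | conv {Γ τ m n} : Derives Sg Γ τ m → n ≤ m → Derives Sg Γ τ n
  | tfloat {Γ m} : Derives Sg Γ .tfloat m
  | tint {Γ m} : Derives Sg Γ .tint m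
  | tbool {Γ m} : Derives Sg Γ .tbool m
  | constr {Γ t n f m} :
      (∀ i : Fin n, Derives Sg Γ (f i) (Mode.comp m (Sg t i))) →
      Derives Sg Γ (.constr t n f) m
  | arrow {Γ τ₁ τ₂ m} :
      Derives Sg Γ τ₁ (Mode.comp m .ind) → Derives Sg Γ τ₂ (Mode.comp m .ind) →
      Derives Sg Γ (.arrow τ₁ τ₂) m
  | prod {Γ n f m} :
      (∀ i : Fin n, Derives Sg Γ (f i) (Mode.comp m .ind)) →
      Derives Sg Γ (.prod n f) m
  | all {Γ a τ m} (n : Mode) : Derives Sg (Γ.upd a n) τ m → Derives Sg Γ (.all a τ) m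
  | ex {Γ a τ m} : Derives Sg (Γ.upd a .ind) τ m → Derives Sg Γ (.ex a τ) m

theorem Mode.le_deepsep (m : Mode) : m ≤ Mode.deepsep := by cases m <;> decide

theorem Mode.comp_mono {a b : Mode} (k : Mode) (h : a ≤ b) :
    Mode.comp a k ≤ Mode.comp b k := by
  cases a <;> cases b <;> cases k <;> first | decide | exact absurd h (by decide)

/-- Monotonicity in the context. -/
theorem Derives.mono {Sg : Sig} {Γ Γ' : Ctx} {τ : Ty} {m : Mode}
    (h : Derives Sg Γ τ m) (hle : ∀ a, Γ a ≤ Γ' a) : Derives Sg Γ' τ m := by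
  induction h generalizing Γ' with
  | var e => exact .conv (.var rfl) (e ▸ hle _)
  | conv _ hnm ih => exact .conv (ih hle) hnm
  | tfloat => exact .tfloat
  | tint => exact .tint
  | tbool => exact .tbool
  | constr _ ih => exact .constr fun i => ih i hle
  | arrow _ _ ih1 ih2 => exact .arrow (ih1 hle) (ih2 hle)
  | prod _ ih => exact .prod fun i => ih i hle
  | all n _ ih =>
      refine .all n (ih fun x => ?_)
      unfold Ctx.upd; split <;> [exact le_rfl; exact hle x]
  | ex _ ih =>
      refine .ex (ih fun x => ?_)
      unfold Ctx.upd; split <;> [exact le_rfl; exact hle x]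

theorem inv_var {Sg Γ τ m} (h : Derives Sg Γ τ m) :
    ∀ {a}, τ = .var a → m ≤ Γ a := by
  induction h with
  | var e => intro a ha; cases ha; exact le_of_eq e.symm
  | conv _ hnm ih => intro a ha; exact le_trans hnm (ih ha)
  | _ => intros; simp_all

theorem inv_constr {Sg Γ τ m} (h : Derives Sg Γ τ m) :
    ∀ {t n f}, τ = .constr t n f → ∀ i : Fin n, Derives Sg Γ (f i) (Mode.comp m (Sg t i)) := by
  induction h with
  | constr hd _ => intro t n f hf i; cases hf; exact hd i
  | conv _ hnm ih => intro t n f hf i; exact .conv (ih hf i) (Mode.comp_mono _ hnm)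
  | _ => intros; simp_all

theorem inv_arrow {Sg Γ τ m} (h : Derives Sg Γ τ m) :
    ∀ {τ₁ τ₂}, τ = .arrow τ₁ τ₂ →
      Derives Sg Γ τ₁ (Mode.comp m .ind) ∧ Derives Sg Γ τ₂ (Mode.comp m .ind) := by
  induction h with
  | arrow h1 h2 => intro τ₁ τ₂ hf; cases hf; exact ⟨h1, h2⟩
  | conv _ hnm ih =>
      intro τ₁ τ₂ hf
      exact ⟨.conv (ih hf).1 (Mode.comp_mono _ hnm), .conv (ih hf).2 (Mode.comp_mono _ hnm)⟩
  | _ => intros; simp_all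

theorem inv_prod {Sg Γ τ m} (h : Derives Sg Γ τ m) :
    ∀ {n f}, τ = .prod n f → ∀ i : Fin n, Derives Sg Γ (f i) (Mode.comp m .ind) := by
  induction h with
  | prod hd _ => intro n f hf i; cases hf; exact hd i
  | conv _ hnm ih => intro n f hf i; exact .conv (ih hf i) (Mode.comp_mono _ hnm)
  | _ => intros; simp_all

theorem inv_all {Sg Γ τ m} (h : Derives Sg Γ τ m) :
    ∀ {a σ}, τ = .all a σ → Derives Sg (Γ.upd a .deepsep) σ m := by
  induction h with
  | all n hd _ =>
      intro a σ hf; cases hf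
      refine hd.mono fun x => ?_
      unfold Ctx.upd; split <;> [exact Mode.le_deepsep _; exact le_rfl]
  | conv _ hnm ih => intro a σ hf; exact .conv (ih hf) hnm
  | _ => intros; simp_all

theorem inv_ex {Sg Γ τ m} (h : Derives Sg Γ τ m) :
    ∀ {a σ}, τ = .ex a σ → Derives Sg (Γ.upd a .ind) σ m := by
  induction h with
  | ex hd _ => intro a σ hf; cases hf; exact hd
  | conv _ hnm ih => intro a σ hf; exact .conv (ih hf) hnm
  | _ => intros; simp_all

theorem upd_min (Γ₁ Γ₂ : Ctx) (a : ℕ) (n : Mode) :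
    (fun x => min ((Γ₁.upd a n) x) ((Γ₂.upd a n) x)) = Ctx.upd (fun x => min (Γ₁ x) (Γ₂ x)) a n := by
  funext x; unfold Ctx.upd; split <;> simp

/-- Constraint-free context intersection: derivability at Γ₁ and at Γ₂
implies derivability at the pointwise minimum of Γ₁ and Γ₂. -/
theorem derives_min_ctx {Sg : Sig} {Γ₁ Γ₂ : Ctx} {τ : Ty} {m : Mode}
    (h₁ : Derives Sg Γ₁ τ m) (h₂ : Derives Sg Γ₂ τ m) :
    Derives Sg (fun a => min (Γ₁ a) (Γ₂ a)) τ m := by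
  induction τ generalizing Γ₁ Γ₂ m with
  | var a => exact .conv (.var rfl) (le_min (inv_var h₁ rfl) (inv_var h₂ rfl))
  | tfloat => exact .tfloat
  | tint => exact .tint
  | tbool => exact .tbool
  | constr t n f ih =>
      exact .constr fun i => ih i (inv_constr h₁ rfl i) (inv_constr h₂ rfl i)
  | arrow τ₁ τ₂ ih1 ih2 =>
      exact .arrow (ih1 (inv_arrow h₁ rfl).1 (inv_arrow h₂ rfl).1)
        (ih2 (inv_arrow h₁ rfl).2 (inv_arrow h₂ rfl).2)
  | prod n f ih =>
      exact .prod fun i => ih i (inv_prod h₁ rfl i) (inv_prod h₂ rfl i)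
  | all a σ ih =>
      exact .all .deepsep (upd_min Γ₁ Γ₂ a .deepsep ▸ ih (inv_all h₁ rfl) (inv_all h₂ rfl))
  | ex a σ ih =>
      exact .ex (upd_min Γ₁ Γ₂ a .ind ▸ ih (inv_ex h₁ rfl) (inv_ex h₂ rfl))
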